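/- arXiv:2301.00121 — 3 statements merged into one kernel-verified Lean document; each statement's English description precedes it below -/
import Mathlib

section
/- With P(q,ε) ∈ Mat_{d+1}(F) defined by P_{i,j} = q^{ij}(εq^{-i};q)_j/(εq;q)_j as above, one has P(q,ε)·P(q^{-1},ε) = ((q;q)_d/(εq;q)_d)·I. In particular, P(q,ε) is invertible. -/
/-!
With `a = ε q⁻ⁱ` and `z = qⁱ q⁻ᵏ`, the `(i, k)` entry of the product is
`(1 - ε) / (1 - ε q⁻ᵏ) · ∑ⱼ zʲ (a;q)ⱼ / (a z q;q)ⱼ`. For `i ≠ k` the sum telescopes, and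
the boundary terms cancel because `z` and `q` are `(d+1)`-st roots of unity. For `i = k` the
summands are `(1 - a) / (1 - a qʲ)`; expanding each `1 / (1 - a qʲ)` as a geometric series
in `a qʲ` gives `∑ⱼ 1 / (1 - a qʲ) = (d + 1) / (1 - ε^(d+1))`. The hypothesis on `ε` says
exactly that `ε^(d+1) ≠ 1`, which keeps every factor `1 - ε qᵐ` nonzero.
-/

/-- The q-Pochhammer symbol `(a;q)_r = (1-a)(1-aq)⋯(1-aq^{r-1})`. -/
def qpoch {F : Type*} [Field F] (a q : F) (r : ℕ) : F :=
  ∏ ℓ ∈ Finset.range r, (1 - a * q ^ ℓ)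

/-- The matrix `P(q,ε)` with entries `q^{ij} (εq^{-i};q)_j / (εq;q)_j`. -/
def Pmat {F : Type*} [Field F] (d : ℕ) (q ε : F) : Matrix (Fin (d + 1)) (Fin (d + 1)) F :=
  Matrix.of fun i j : Fin (d + 1) =>
    q ^ (i.val * j.val) * qpoch (ε * q⁻¹ ^ i.val) q j.val / qpoch (ε * q) q j.val

open Finset

section

variable {F : Type*} [Field F]

theorem qpoch_zero (a q : F) : qpoch a q 0 = 1 := prod_range_zero _

theorem qpoch_succ (a q : F) (r : ℕ) : qpoch a q (r + 1) = qpoch a q r * (1 - a * q ^ r) :=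
  prod_range_succ _ _

theorem qpoch_succ' (a q : F) (r : ℕ) : qpoch a q (r + 1) = (1 - a) * qpoch (a * q) q r := by
  simp only [qpoch, prod_range_succ', pow_succ', pow_zero, mul_one, mul_assoc, mul_comm (1 - a)]

theorem qpoch_mul_one_sub (a q : F) (r : ℕ) :
    qpoch a q r * (1 - a * q ^ r) = (1 - a) * qpoch (a * q) q r := by
  rw [← qpoch_succ, qpoch_succ']

/- Both sides are `∏_{l = -k}^{j} (1 - ε qˡ)`. -/
theorem qpoch_inv_mul_one_sub_mul_qpoch {q : F} (hq : q ≠ 0) (ε : F) (j k : ℕ) :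
    qpoch (ε * q ^ j) q⁻¹ k * (1 - ε * q⁻¹ ^ k) * qpoch (ε * q⁻¹ ^ k * q) q j =
      (1 - ε) * qpoch (ε * q) q j * qpoch (ε * q⁻¹) q⁻¹ k := by
  induction j with
  | zero => simp only [pow_zero, mul_one, qpoch_zero, qpoch_mul_one_sub]
  | succ j ih =>
    have shift := qpoch_mul_one_sub (ε * q ^ (j + 1)) q⁻¹ k
    rw [show ε * q ^ (j + 1) * q⁻¹ = ε * q ^ j by field_simp; ring] at shift
    rw [qpoch_succ, qpoch_succ]
    linear_combination (1 - ε * q⁻¹ ^ k) * qpoch (ε * q⁻¹ ^ k * q) q j * shift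
      + (1 - ε * q ^ (j + 1)) * ih

namespace IsPrimitiveRoot

variable {n : ℕ} {q : F}

theorem mul_pow_pow_eq (hq : IsPrimitiveRoot q n) (c : F) (m : ℕ) : (c * q ^ m) ^ n = c ^ n := by
  rw [mul_pow, ← pow_mul, mul_comm m, pow_mul, hq.pow_eq_one, one_pow, mul_one]

theorem mul_pow_eq (hq : IsPrimitiveRoot q n) (c : F) : (c * q) ^ n = c ^ n := by
  simpa using hq.mul_pow_pow_eq c 1

theorem qpoch_eq (hq : IsPrimitiveRoot q n) (hn : 0 < n) (c : F) : qpoch c q n = 1 - c ^ n := by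
  have h := X_pow_sub_C_eq_prod hq hn (rfl : c ^ n = c ^ n)
  apply_fun Polynomial.eval 1 at h
  simpa [qpoch, mul_comm, Polynomial.eval_prod] using h.symm

theorem one_sub_mul_pow_ne_zero (hq : IsPrimitiveRoot q n) {c : F} (hc : c ^ n ≠ 1) (m : ℕ) :
    1 - c * q ^ m ≠ 0 := fun h =>
  hc (by rw [← hq.mul_pow_pow_eq c m, ← sub_eq_zero.1 h, one_pow])

theorem qpoch_ne_zero (hq : IsPrimitiveRoot q n) {c : F} (hc : c ^ n ≠ 1) (r : ℕ) :
    qpoch c q r ≠ 0 :=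
  prod_ne_zero_iff.2 fun ℓ _ => hq.one_sub_mul_pow_ne_zero hc ℓ

theorem qpoch_self_ne_zero (hq : IsPrimitiveRoot q (n + 1)) : qpoch q q n ≠ 0 :=
  prod_ne_zero_iff.2 fun ℓ hℓ h => hq.pow_ne_one_of_pos_of_lt ℓ.succ_ne_zero
    (by simpa using hℓ) (by rw [pow_succ']; exact (sub_eq_zero.1 h).symm)

theorem qpoch_self (hq : IsPrimitiveRoot q (n + 1)) : qpoch q q n = n + 1 := by
  rw [← hq.prod_one_sub_pow_eq_order]
  exact prod_congr rfl fun ℓ _ => by rw [pow_succ']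

theorem geom_sum_pow (hq : IsPrimitiveRoot q n) {r : ℕ} (hr : r < n) :
    ∑ j ∈ range n, (q ^ r) ^ j = if r = 0 then (n : F) else 0 := by
  split_ifs with h0
  · simp [h0]
  · have hne : q ^ r ≠ 1 := hq.pow_ne_one_of_pos_of_lt h0 hr
    refine eq_zero_of_ne_zero_of_mul_left_eq_zero (sub_ne_zero.2 hne.symm) ?_
    rw [mul_neg_geom_sum, ← pow_mul, mul_comm, pow_mul, hq.pow_eq_one, one_pow, sub_self]

theorem sum_inv_one_sub_mul_pow (hq : IsPrimitiveRoot q n) {c : F} (hc : c ^ n ≠ 1) :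
    ∑ j ∈ range n, (1 - c * q ^ j)⁻¹ = n / (1 - c ^ n) := by
  have hc' : 1 - c ^ n ≠ 0 := sub_ne_zero.2 hc.symm
  have geom (j : ℕ) :
      (1 - c * q ^ j)⁻¹ = (∑ r ∈ range n, c ^ r * (q ^ r) ^ j) / (1 - c ^ n) := by
    have h := mul_neg_geom_sum (c * q ^ j) n
    rw [hq.mul_pow_pow_eq] at h
    rw [eq_div_iff hc', ← h, inv_mul_cancel_left₀ (hq.one_sub_mul_pow_ne_zero hc j)]
    exact sum_congr rfl fun r _ => by ring
  rw [sum_congr rfl fun j _ => geom j, ← sum_div, sum_comm]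
  simp only [← mul_sum]
  rw [sum_congr rfl fun r hr => by rw [hq.geom_sum_pow (mem_range.1 hr)]]
  have hn : 0 < n := Nat.pos_of_ne_zero <| by rintro rfl; exact hc (pow_zero c)
  simp [hn]

theorem sum_qpoch_div_qpoch_mul (hq : IsPrimitiveRoot q n) {a : F} (ha : a ^ n ≠ 1) :
    ∑ j ∈ range n, qpoch a q j / qpoch (a * q) q j = n * (1 - a) / (1 - a ^ n) := by
  have term (j : ℕ) : qpoch a q j / qpoch (a * q) q j = (1 - a) * (1 - a * q ^ j)⁻¹ := by
    rw [div_eq_iff (hq.qpoch_ne_zero ((hq.mul_pow_eq a).trans_ne ha) j), eq_comm, mul_right_comm,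
      ← qpoch_mul_one_sub, mul_inv_cancel_right₀ (hq.one_sub_mul_pow_ne_zero ha j)]
  rw [sum_congr rfl fun j _ => term j, ← mul_sum, hq.sum_inv_one_sub_mul_pow ha]
  ring

theorem sum_qpoch_div_qpoch_eq_zero (hq : IsPrimitiveRoot q n) {a z : F} (ha : a ^ n ≠ 1)
    (hz : z ^ n = 1) (hz1 : z ≠ 1) :
    ∑ j ∈ range n, z ^ j * qpoch a q j / qpoch (a * z * q) q j = 0 := by
  have hn : 0 < n := Nat.pos_of_ne_zero <| by rintro rfl; exact ha (pow_zero a)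
  have hazq : (a * z * q) ^ n = a ^ n := by rw [hq.mul_pow_eq, mul_pow, hz, mul_one]
  have hden := hq.qpoch_ne_zero (hazq.trans_ne ha)
  set T : ℕ → F := fun j => z ^ j * qpoch a q j * (1 - a * z * q ^ j) / qpoch (a * z * q) q j
  have step (j : ℕ) :
      T (j + 1) - T j = (z - 1) * (z ^ j * qpoch a q j / qpoch (a * z * q) q j) := by
    simp only [T, qpoch_succ, show a * z * q ^ (j + 1) = a * z * q * q ^ j by ring]
    rw [mul_div_mul_right _ _ (hq.one_sub_mul_pow_ne_zero (hazq.trans_ne ha) j)]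
    field_simp [hden j]
    ring
  have periodic : T n = T 0 := by
    simp only [T, hq.qpoch_eq hn, hazq, hz, hq.pow_eq_one, qpoch_zero]
    field_simp [sub_ne_zero.2 ha.symm]
  have h : (z - 1) * ∑ j ∈ range n, z ^ j * qpoch a q j / qpoch (a * z * q) q j = 0 := by
    rw [mul_sum, ← sum_congr rfl fun j _ => step j, sum_range_sub, periodic, sub_self]
  exact (mul_eq_zero.1 h).resolve_left (sub_ne_zero.2 hz1)

end IsPrimitiveRoot

section Pmat

variable {n d : ℕ} {q ε : F}

theorem Pmat_mul_Pmat_inv_summand (hq : IsPrimitiveRoot q n) (hε : ε ^ n ≠ 1) (i j k : ℕ) :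
    q ^ (i * j) * qpoch (ε * q⁻¹ ^ i) q j / qpoch (ε * q) q j *
        (q⁻¹ ^ (j * k) * qpoch (ε * q ^ j) q⁻¹ k / qpoch (ε * q⁻¹) q⁻¹ k) =
      (1 - ε) / (1 - ε * q⁻¹ ^ k) *
        ((q ^ i * q⁻¹ ^ k) ^ j * qpoch (ε * q⁻¹ ^ i) q j / qpoch (ε * q⁻¹ ^ k * q) q j) := by
  have hq0 : q ≠ 0 := hq.ne_zero (by rintro rfl; exact hε (pow_zero ε))
  have h₁ : qpoch (ε * q) q j ≠ 0 := hq.qpoch_ne_zero ((hq.mul_pow_eq ε).trans_ne hε) j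
  have h₂ : qpoch (ε * q⁻¹) q⁻¹ k ≠ 0 := hq.inv.qpoch_ne_zero ((hq.inv.mul_pow_eq ε).trans_ne hε) k
  have h₃ : 1 - ε * q⁻¹ ^ k ≠ 0 := hq.inv.one_sub_mul_pow_ne_zero hε k
  have h₄ : qpoch (ε * q⁻¹ ^ k * q) q j ≠ 0 :=
    hq.qpoch_ne_zero (((hq.mul_pow_eq _).trans (hq.inv.mul_pow_pow_eq ε k)).trans_ne hε) j
  rw [mul_pow, ← pow_mul, ← pow_mul, mul_comm k j, div_mul_div_comm, div_mul_div_comm,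
    div_eq_div_iff (mul_ne_zero h₁ h₂) (mul_ne_zero h₃ h₄)]
  linear_combination q ^ (i * j) * q⁻¹ ^ (j * k) * qpoch (ε * q⁻¹ ^ i) q j *
    qpoch_inv_mul_one_sub_mul_qpoch hq0 ε j k

theorem Pmat_mul_Pmat_inv_apply (hq : IsPrimitiveRoot q (d + 1)) (hε : ε ^ (d + 1) ≠ 1)
    (i k : Fin (d + 1)) :
    (Pmat d q ε * Pmat d q⁻¹ ε) i k = if i = k then qpoch q q d / qpoch (ε * q) q d else 0 := by
  simp only [Matrix.mul_apply, Pmat, Matrix.of_apply, inv_inv,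
    Pmat_mul_Pmat_inv_summand hq hε, ← mul_sum]
  rw [Fin.sum_univ_eq_sum_range (fun j => (q ^ (i : ℕ) * q⁻¹ ^ (k : ℕ)) ^ j *
    qpoch (ε * q⁻¹ ^ (i : ℕ)) q j / qpoch (ε * q⁻¹ ^ (k : ℕ) * q) q j)]
  have hα : (ε * q⁻¹ ^ (i : ℕ)) ^ (d + 1) ≠ 1 := (hq.inv.mul_pow_pow_eq ε i).trans_ne hε
  have hq0 : q ≠ 0 := hq.ne_zero d.succ_ne_zero
  split_ifs with hik
  · subst hik
    have h₁ : 1 - ε * q⁻¹ ^ (i : ℕ) ≠ 0 := hq.inv.one_sub_mul_pow_ne_zero hε i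
    have h₂ : (1 - ε) * qpoch (ε * q) q d ≠ 0 := qpoch_succ' ε q d ▸ hq.qpoch_ne_zero hε _
    simp only [← mul_pow, mul_inv_cancel₀ hq0, one_pow, one_mul]
    rw [hq.sum_qpoch_div_qpoch_mul hα, hq.inv.mul_pow_pow_eq, hq.qpoch_self,
      ← hq.qpoch_eq d.succ_pos ε, qpoch_succ', div_mul_div_comm,
      div_eq_div_iff (mul_ne_zero h₁ h₂) (right_ne_zero_of_mul h₂)]
    push_cast
    ring
  · have hz : (q ^ (i : ℕ) * q⁻¹ ^ (k : ℕ)) ^ (d + 1) = 1 := by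
      rw [hq.inv.mul_pow_pow_eq, ← one_mul (q ^ (i : ℕ)), hq.mul_pow_pow_eq, one_pow]
    have hz1 : q ^ (i : ℕ) * q⁻¹ ^ (k : ℕ) ≠ 1 := fun h => by
      rw [inv_pow, mul_inv_eq_one₀ (pow_ne_zero _ hq0)] at h
      exact hik (Fin.ext (hq.pow_inj i.isLt k.isLt h))
    have hshift :
        ε * q⁻¹ ^ (k : ℕ) * q = ε * q⁻¹ ^ (i : ℕ) * (q ^ (i : ℕ) * q⁻¹ ^ (k : ℕ)) * q := by
      have hcancel : q⁻¹ ^ (i : ℕ) * q ^ (i : ℕ) = 1 := by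
        rw [← mul_pow, inv_mul_cancel₀ hq0, one_pow]
      linear_combination -(ε * q⁻¹ ^ (k : ℕ) * q) * hcancel
    rw [hshift, hq.sum_qpoch_div_qpoch_eq_zero hα hz hz1, mul_zero]

end Pmat

end

theorem stmt4_general {F : Type*} [Field F] (d : ℕ) (q ε : F)
    (hq : IsPrimitiveRoot q (d + 1))
    (hε : ∀ i : ℕ, i ≤ d → ε ≠ q ^ i) :
    Pmat d q ε * Pmat d q⁻¹ ε =
        (qpoch q q d / qpoch (ε * q) q d) • (1 : Matrix (Fin (d + 1)) (Fin (d + 1)) F) ∧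
      IsUnit (Pmat d q ε) := by
  have hεn : ε ^ (d + 1) ≠ 1 := fun h => by
    obtain ⟨i, hi, rfl⟩ := hq.eq_pow_of_pow_eq_one h
    exact hε i (Nat.lt_succ_iff.1 hi) rfl
  have hmul : Pmat d q ε * Pmat d q⁻¹ ε =
      (qpoch q q d / qpoch (ε * q) q d) • (1 : Matrix (Fin (d + 1)) (Fin (d + 1)) F) := by
    ext i k
    rw [Pmat_mul_Pmat_inv_apply hq hεn, Matrix.smul_apply, Matrix.one_apply, smul_ite, smul_zero,
      smul_eq_mul, mul_one]
  have hc : qpoch q q d / qpoch (ε * q) q d ≠ 0 :=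
    div_ne_zero hq.qpoch_self_ne_zero (hq.qpoch_ne_zero ((hq.mul_pow_eq ε).trans_ne hεn) d)
  refine ⟨hmul, (Matrix.isUnit_iff_isUnit_det _).2 (Matrix.isUnit_det_of_right_inverse
    (B := (qpoch q q d / qpoch (ε * q) q d)⁻¹ • Pmat d q⁻¹ ε) ?_)⟩
  rw [Matrix.mul_smul, hmul, smul_smul, inv_mul_cancel₀ hc, one_smul]

theorem stmt4 {F : Type*} [Field F] (d : ℕ) (hd : 1 ≤ d) (q ε : F)
    (hq : IsPrimitiveRoot q (d + 1))
    (hε : ∀ i : ℕ, i ≤ d → ε ≠ q ^ i) :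
    Pmat d q ε * Pmat d q⁻¹ ε =
        (qpoch q q d / qpoch (ε * q) q d) • (1 : Matrix (Fin (d + 1)) (Fin (d + 1)) F) ∧
      IsUnit (Pmat d q ε) :=
  stmt4_general d q ε hq hε
end

section
/- Let A, A* be a circular bidiagonal pair on a (d+1)-dimensional F-vector space V. Then there exists a unique 4-tuple (q, α, β, γ) of scalars in F such that qAA* − A*A + αA − βA* = γI. -/
/-- A square matrix is circular bidiagonal. -/
def IsCircBidiag {F : Type*} [Field F] {d : ℕ} (M : Matrix (Fin (d + 1)) (Fin (d + 1)) F) : Prop :=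
  (∀ i j : Fin (d + 1), M i j ≠ 0 → i = j ∨ i.val = j.val + 1 ∨ (i.val = 0 ∧ j.val = d)) ∧
  (∀ i j : Fin (d + 1), i.val = j.val + 1 → M i j ≠ 0) ∧
  M 0 (Fin.last d) ≠ 0

/-- A circular bidiagonal pair on `V`. -/
def IsCBPair {F V : Type*} [Field F] [AddCommGroup V] [Module F V] (d : ℕ)
    (A Astar : V →ₗ[F] V) : Prop :=
  (∃ b : Module.Basis (Fin (d + 1)) F V,
    IsCircBidiag (LinearMap.toMatrix b b A) ∧ (LinearMap.toMatrix b b Astar).IsDiag) ∧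
  (∃ b : Module.Basis (Fin (d + 1)) F V,
    IsCircBidiag (LinearMap.toMatrix b b Astar) ∧ (LinearMap.toMatrix b b A).IsDiag)

/-!
Take a basis in which `A` is circular bidiagonal and `A* = diag θ`, and one in which `A*` is
circular bidiagonal and `A = diag θ*`. A circular bidiagonal matrix `B` is nonderogatory:
`(B ^ k) j i` vanishes below distance `k = j - i` (taken mod `d + 1`) and not at it, so no
nonzero polynomial of degree `≤ d` kills `B`. Hence the `θ i` are distinct, and Lagrange
interpolation turns `diag θ · A = A · diag (θ (i + 1)) + diag (A i i (θ i - θ (i + 1)))` into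
`A* A = A p(A*) + r(A*)` with `deg p, deg r ≤ d`. In the second basis the entry at distance
`k = max (deg p) (deg r)` of this identity reads `(p_k θ*_j + r_k) (A* ^ k) j i = 0` when
`k ≥ 2`; as `θ*` is not constant, `p_k = r_k = 0`, so `p` and `r` are affine, which gives the
relation. Uniqueness: in the first basis the subdiagonal entries of `x AA* + y A + z A* + w I`
are `A (i + 1) i (x θ i + y)` and its diagonal entries are then `z θ i + w`.
-/

open Polynomial

theorem Fin.add_one_ne_self {d : ℕ} (hd : 1 ≤ d) (k : Fin (d + 1)) : k + 1 ≠ k := by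
  intro h
  have := congrArg Fin.val (add_eq_left.mp h)
  simp [Nat.mod_eq_of_lt (by omega : 1 < d + 1)] at this

section Diagonal

variable {F : Type*} [Field F] {d : ℕ}

theorem eq_zero_of_forall_mul_add_eq_zero {ι : Type*} {θ : ι → F} (hθ : ∃ i j, θ i ≠ θ j)
    {x y : F} (h : ∀ i, x * θ i + y = 0) : x = 0 ∧ y = 0 := by
  obtain ⟨i, j, hij⟩ := hθ
  have hx : x = 0 := by
    have : x * (θ i - θ j) = 0 := by linear_combination h i - h j
    exact (mul_eq_zero.mp this).resolve_right (sub_ne_zero.mpr hij)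
  exact ⟨hx, by simpa [hx] using h i⟩

theorem aeval_diagonal {R ι : Type*} [CommSemiring R] [Fintype ι] [DecidableEq ι] (θ : ι → R)
    (p : R[X]) :
    aeval (Matrix.diagonal θ) p = Matrix.diagonal fun i => p.eval (θ i) := by
  induction p using Polynomial.induction_on' with
  | add p q hp hq => simp [hp, hq]
  | monomial n a =>
    simp [Matrix.diagonal_pow, Algebra.algebraMap_eq_smul_one, Matrix.smul_one_eq_diagonal]

theorem exists_natDegree_le_aeval_diagonal_eq {θ : Fin (d + 1) → F}
    (hθ : Function.Injective θ) (f : Fin (d + 1) → F) :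
    ∃ p : F[X], p.natDegree ≤ d ∧ aeval (Matrix.diagonal θ) p = Matrix.diagonal f := by
  have hθ' : Set.InjOn θ (Finset.univ : Finset (Fin (d + 1))) := hθ.injOn
  refine ⟨Lagrange.interpolate Finset.univ θ f, ?_, ?_⟩
  · have hlt := Lagrange.degree_interpolate_lt f hθ'
    rw [Finset.card_univ, Fintype.card_fin] at hlt
    exact natDegree_le_iff_coeff_eq_zero.mpr fun N hN => (degree_lt_iff_coeff_zero _ _).mp hlt N hN
  · rw [aeval_diagonal]
    congr 1
    funext i
    exact Lagrange.eval_interpolate_at_node f hθ' (Finset.mem_univ i)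

theorem injective_of_forall_aeval_diagonal_eq_zero {θ : Fin (d + 1) → F}
    (h : ∀ q : F[X], q.natDegree ≤ d → aeval (Matrix.diagonal θ) q = 0 → q = 0) :
    Function.Injective θ := by
  intro i j hij
  by_contra hne
  set q : F[X] := ∏ m ∈ Finset.univ.erase j, (X - C (θ m))
  have hq : q.Monic := monic_prod_of_monic _ _ fun m _ => monic_X_sub_C (θ m)
  refine hq.ne_zero (h q ?_ ?_)
  · rw [natDegree_finsetProd_X_sub_C_eq_card, Finset.card_erase_of_mem (Finset.mem_univ j),
      Finset.card_univ, Fintype.card_fin, Nat.add_sub_cancel]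
  · rw [aeval_diagonal, Matrix.diagonal_eq_zero]
    funext m
    -- for `m = j` the root comes from the factor `X - C (θ i)`
    obtain ⟨n, hn, hθn⟩ : ∃ n ∈ Finset.univ.erase j, θ n = θ m := by
      by_cases hm : m = j
      · exact ⟨i, Finset.mem_erase.mpr ⟨hne, Finset.mem_univ i⟩, hm ▸ hij⟩
      · exact ⟨m, Finset.mem_erase.mpr ⟨hm, Finset.mem_univ m⟩, rfl⟩
    simpa [q, eval_prod] using Finset.prod_eq_zero hn (by simp [hθn])

end Diagonal

namespace IsCircBidiag

variable {F : Type*} [Field F] {d : ℕ} {M : Matrix (Fin (d + 1)) (Fin (d + 1)) F}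

theorem eq_or_eq_add_one_of_apply_ne_zero (hM : IsCircBidiag M) {j k : Fin (d + 1)}
    (h : M j k ≠ 0) : j = k ∨ j = k + 1 := by
  rcases hM.1 _ _ h with h | h | ⟨hj, hk⟩
  · exact Or.inl h
  · refine Or.inr (Fin.ext ?_)
    rw [Fin.val_add_one_of_lt (Fin.lt_last_iff_ne_last.mpr ?_)]
    · exact h
    · intro hk
      have := j.is_lt
      simp [hk] at h
      omega
  · right
    rw [show k = Fin.last d from Fin.ext hk, Fin.last_add_one]
    exact Fin.ext hj

theorem apply_add_one_ne_zero (hM : IsCircBidiag M) (k : Fin (d + 1)) : M (k + 1) k ≠ 0 := by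
  by_cases hk : k = Fin.last d
  · rw [hk, Fin.last_add_one]
    exact hM.2.2
  · exact hM.2.1 _ _ (Fin.val_add_one_of_lt (Fin.lt_last_iff_ne_last.mpr hk))

theorem mul_apply_eq_add (hd : 1 ≤ d) (hM : IsCircBidiag M)
    (N : Matrix (Fin (d + 1)) (Fin (d + 1)) F) (j i : Fin (d + 1)) : (M * N) j i = M j j * N j i + M j (j - 1) * N (j - 1) i := by
  rw [Matrix.mul_apply]
  refine Fintype.sum_eq_add _ _ ?_ fun m ⟨hmj, hm⟩ => ?_
  · exact fun h => Fin.add_one_ne_self hd (j - 1) (by rwa [sub_add_cancel])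
  · by_contra hne
    rcases hM.eq_or_eq_add_one_of_apply_ne_zero (left_ne_zero_of_mul hne) with h | h
    · exact hmj h.symm
    · exact hm (eq_sub_of_add_eq h.symm)

theorem pow_apply_eq_zero_of_lt (hM : IsCircBidiag M) {s : ℕ} {i j : Fin (d + 1)}
    (h : s < (j - i).val) : (M ^ s) j i = 0 := by
  induction s generalizing j with
  | zero => exact Matrix.one_apply_ne fun hji => by simp [hji] at h
  | succ s ih =>
    have hd : 1 ≤ d := by have := (j - i).is_lt; omega
    have hji : j - i ≠ 0 := fun h0 => by simp [h0] at h
    have hprev : s < (j - 1 - i).val := by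
      rw [sub_right_comm, Fin.val_sub_one_of_ne_zero hji]
      omega
    rw [pow_succ', hM.mul_apply_eq_add hd, ih (by omega), ih hprev, mul_zero, mul_zero, add_zero]

theorem pow_apply_ne_zero (hM : IsCircBidiag M) (i j : Fin (d + 1)) :
    (M ^ (j - i).val) j i ≠ 0 := by
  generalize hs : (j - i).val = s
  induction s generalizing j with
  | zero => simp [sub_eq_zero.mp (Fin.ext hs)]
  | succ s ih =>
    have hd : 1 ≤ d := by have := (j - i).is_lt; omega
    have hji : j - i ≠ 0 := fun h0 => by simp [h0] at hs
    have hprev : (j - 1 - i).val = s := by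
      rw [sub_right_comm, Fin.val_sub_one_of_ne_zero hji]
      omega
    rw [pow_succ', hM.mul_apply_eq_add hd, hM.pow_apply_eq_zero_of_lt (by omega), mul_zero,
      zero_add]
    refine mul_ne_zero ?_ (ih _ hprev)
    simpa using hM.apply_add_one_ne_zero (j - 1)

theorem aeval_apply (hM : IsCircBidiag M) {p : F[X]} {i j : Fin (d + 1)}
    (hp : p.natDegree ≤ (j - i).val) :
    aeval M p j i = p.coeff (j - i).val * (M ^ (j - i).val) j i := by
  rw [aeval_eq_sum_range' (Nat.lt_succ_of_le hp), Matrix.sum_apply,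
    Finset.sum_eq_single_of_mem _ (Finset.self_mem_range_succ _)]
  · rfl
  · intro s hs hsk
    rw [Matrix.smul_apply, hM.pow_apply_eq_zero_of_lt, smul_zero]
    have := Finset.mem_range.mp hs
    omega

theorem eq_zero_of_aeval_eq_zero (hM : IsCircBidiag M) {q : F[X]} (hq : q.natDegree ≤ d)
    (h : aeval M q = 0) : q = 0 := by
  by_contra hq0
  set j : Fin (d + 1) := ⟨q.natDegree, by omega⟩
  have hj : (j - 0).val = q.natDegree := by simp [j]
  have hentry := congrFun (congrFun h j) 0
  rw [hM.aeval_apply hj.ge, hj] at hentry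
  rcases mul_eq_zero.mp hentry with hc | hc
  · exact hq0 (leadingCoeff_eq_zero.mp hc)
  · exact hM.pow_apply_ne_zero 0 j (hj ▸ hc)

theorem natDegree_le_one_of_mul_diagonal_eq (hM : IsCircBidiag M) {θ : Fin (d + 1) → F}
    (hθ : ∃ i j, θ i ≠ θ j) {p r : F[X]} (hp : p.natDegree ≤ d) (hr : r.natDegree ≤ d)
    (h : M * Matrix.diagonal θ = Matrix.diagonal θ * aeval M p + aeval M r) :
    p.natDegree ≤ 1 ∧ r.natDegree ≤ 1 := by
  set k := max p.natDegree r.natDegree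
  suffices hk : k ≤ 1 by omega
  by_contra! hk
  have hcoeff : ∀ j, p.coeff k * θ j + r.coeff k = 0 := by
    intro j
    set i : Fin (d + 1) := j - ⟨k, by omega⟩
    have hji : (j - i).val = k := by simp [i]
    have hMji : M j i = 0 := by simpa using hM.pow_apply_eq_zero_of_lt (s := 1) (by omega)
    have hentry := congrFun (congrFun h j) i
    rw [Matrix.add_apply, Matrix.mul_diagonal, Matrix.diagonal_mul, hMji,
      hM.aeval_apply (hji ▸ le_max_left _ _), hM.aeval_apply (hji ▸ le_max_right _ _),
      hji] at hentry
    have hfac : (p.coeff k * θ j + r.coeff k) * (M ^ k) j i = 0 := by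
      linear_combination -hentry
    exact (mul_eq_zero.mp hfac).resolve_right (hji ▸ hM.pow_apply_ne_zero i j)
  obtain ⟨hpk, hrk⟩ := eq_zero_of_forall_mul_add_eq_zero hθ hcoeff
  obtain hmax | hmax : k = p.natDegree ∨ k = r.natDegree := max_choice _ _
  · exact leadingCoeff_ne_zero.mpr (ne_zero_of_natDegree_gt (n := 0) (by omega)) (hmax ▸ hpk)
  · exact leadingCoeff_ne_zero.mpr (ne_zero_of_natDegree_gt (n := 0) (by omega)) (hmax ▸ hrk)

theorem diagonal_mul_eq (hM : IsCircBidiag M) (θ : Fin (d + 1) → F) :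
    Matrix.diagonal θ * M = M * Matrix.diagonal (fun i => θ (i + 1)) +
      Matrix.diagonal (fun i => M i i * (θ i - θ (i + 1))) := by
  ext j i
  rw [Matrix.add_apply, Matrix.diagonal_mul, Matrix.mul_diagonal]
  by_cases hji : j = i
  · subst hji
    rw [Matrix.diagonal_apply_eq]
    ring
  · rw [Matrix.diagonal_apply_ne _ hji, add_zero]
    by_cases hM0 : M j i = 0
    · rw [hM0, mul_zero, zero_mul]
    · rcases hM.eq_or_eq_add_one_of_apply_ne_zero hM0 with h | rfl
      · exact absurd h hji
      · rw [mul_comm]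

theorem ne_smul_one (hd : 1 ≤ d) (hM : IsCircBidiag M) (c : F) : M ≠ c • 1 := by
  intro h
  have := hM.apply_add_one_ne_zero 0
  rw [h, zero_add, Matrix.smul_apply, Matrix.one_apply_ne (by simpa using Fin.add_one_ne_self hd 0),
    smul_zero] at this
  exact this rfl

end IsCircBidiag

theorem Polynomial.aeval_eq_smul_add_smul_one_of_natDegree_le_one {R A : Type*} [CommSemiring R]
    [Semiring A] [Algebra R A] {p : R[X]} (hp : p.natDegree ≤ 1) (x : A) :
    aeval x p = p.coeff 1 • x + p.coeff 0 • 1 := by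
  conv_lhs => rw [eq_X_add_C_of_natDegree_le_one hp]
  simp [Algebra.algebraMap_eq_smul_one]

theorem LinearMap.toMatrix_aeval {R M ι : Type*} [CommRing R] [AddCommGroup M] [Module R M]
    [Fintype ι] [DecidableEq ι] (b : Module.Basis ι R M) (f : Module.End R M) (p : R[X]) :
    LinearMap.toMatrix b b (aeval f p) = aeval (LinearMap.toMatrix b b f) p :=
  (aeval_algHom_apply (LinearMap.toMatrixAlgEquiv b) f p).symm

section Endomorphism

variable {F V : Type*} [Field F] [AddCommGroup V] [Module F V] {d : ℕ}
  {A Astar : Module.End F V} {θ : Fin (d + 1) → F}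

theorem injective_of_toMatrix_eq_diagonal (b b' : Module.Basis (Fin (d + 1)) F V)
    (hθ : LinearMap.toMatrix b b Astar = Matrix.diagonal θ)
    (hAstar : IsCircBidiag (LinearMap.toMatrix b' b' Astar)) : Function.Injective θ := by
  refine injective_of_forall_aeval_diagonal_eq_zero fun q hq h =>
    hAstar.eq_zero_of_aeval_eq_zero hq ?_
  rw [← hθ, ← LinearMap.toMatrix_aeval, LinearEquiv.map_eq_zero_iff] at h
  rw [← LinearMap.toMatrix_aeval, h, map_zero]

theorem exists_ne_of_toMatrix_eq_diagonal (hd : 1 ≤ d) (b b' : Module.Basis (Fin (d + 1)) F V)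
    (hθ : LinearMap.toMatrix b b Astar = Matrix.diagonal θ)
    (hAstar : IsCircBidiag (LinearMap.toMatrix b' b' Astar)) : ∃ i j, θ i ≠ θ j := by
  by_contra! hconst
  have hscalar : Astar = θ 0 • 1 := by
    apply (LinearMap.toMatrix b b).injective
    rw [hθ, map_smul, LinearMap.toMatrix_one, Matrix.smul_one_eq_diagonal]
    exact congrArg Matrix.diagonal (funext fun i => hconst i 0)
  rw [hscalar, map_smul, LinearMap.toMatrix_one] at hAstar
  exact hAstar.ne_smul_one hd (θ 0) rfl

theorem exists_mul_eq_mul_aeval_add_aeval (b : Module.Basis (Fin (d + 1)) F V)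
    (hA : IsCircBidiag (LinearMap.toMatrix b b A))
    (hθ : LinearMap.toMatrix b b Astar = Matrix.diagonal θ) (hinj : Function.Injective θ) :
    ∃ p r : F[X], p.natDegree ≤ d ∧ r.natDegree ≤ d ∧
      Astar * A = A * aeval Astar p + aeval Astar r := by
  obtain ⟨p, hp, hpθ⟩ := exists_natDegree_le_aeval_diagonal_eq hinj fun i => θ (i + 1)
  obtain ⟨r, hr, hrθ⟩ := exists_natDegree_le_aeval_diagonal_eq hinj
    fun i => LinearMap.toMatrix b b A i i * (θ i - θ (i + 1))
  refine ⟨p, r, hp, hr, (LinearMap.toMatrix b b).injective ?_⟩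
  rw [LinearMap.toMatrix_mul, map_add, LinearMap.toMatrix_mul, LinearMap.toMatrix_aeval,
    LinearMap.toMatrix_aeval, hθ, hpθ, hrθ]
  exact hA.diagonal_mul_eq θ

theorem natDegree_le_one_of_mul_eq_mul_aeval_add_aeval (b : Module.Basis (Fin (d + 1)) F V)
    (hAstar : IsCircBidiag (LinearMap.toMatrix b b Astar))
    (hθ : LinearMap.toMatrix b b A = Matrix.diagonal θ) (hθ' : ∃ i j, θ i ≠ θ j) {p r : F[X]}
    (hp : p.natDegree ≤ d) (hr : r.natDegree ≤ d)
    (h : Astar * A = A * aeval Astar p + aeval Astar r) : p.natDegree ≤ 1 ∧ r.natDegree ≤ 1 := by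
  refine hAstar.natDegree_le_one_of_mul_diagonal_eq hθ' hp hr ?_
  rw [← hθ, ← LinearMap.toMatrix_aeval, ← LinearMap.toMatrix_aeval, ← LinearMap.toMatrix_mul,
    ← LinearMap.toMatrix_mul, ← map_add, h]

theorem linearIndependent_of_toMatrix_eq_diagonal (hd : 1 ≤ d)
    (b : Module.Basis (Fin (d + 1)) F V) (hA : IsCircBidiag (LinearMap.toMatrix b b A))
    (hθ : LinearMap.toMatrix b b Astar = Matrix.diagonal θ) (hθ' : ∃ i j, θ i ≠ θ j) :
    LinearIndependent F ![A * Astar, A, Astar, 1] := by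
  rw [Fintype.linearIndependent_iff]
  intro g hg
  simp only [Fin.sum_univ_four, Matrix.cons_val] at hg
  have hm := congrArg (LinearMap.toMatrix b b) hg
  rw [map_add, map_add, map_add, map_smul, map_smul, map_smul, map_smul, map_zero,
    LinearMap.toMatrix_mul, hθ, LinearMap.toMatrix_one] at hm
  have hsub : ∀ i, g 0 * θ i + g 1 = 0 := by
    intro i
    have he := congrFun (congrFun hm (i + 1)) i
    have hne := Fin.add_one_ne_self hd i
    simp only [Matrix.add_apply, Matrix.smul_apply, Matrix.mul_diagonal, Matrix.zero_apply,
      Matrix.diagonal_apply_ne _ hne, Matrix.one_apply_ne hne, smul_eq_mul, mul_zero,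
      add_zero] at he
    have hfac : LinearMap.toMatrix b b A (i + 1) i * (g 0 * θ i + g 1) = 0 := by
      linear_combination he
    exact (mul_eq_zero.mp hfac).resolve_left (hA.apply_add_one_ne_zero i)
  obtain ⟨h0, h1⟩ := eq_zero_of_forall_mul_add_eq_zero hθ' hsub
  have hdiag : ∀ i, g 2 * θ i + g 3 = 0 := by
    intro i
    have he := congrFun (congrFun hm i) i
    simp only [Matrix.add_apply, Matrix.smul_apply, Matrix.mul_diagonal, Matrix.zero_apply,
      Matrix.diagonal_apply_eq, Matrix.one_apply_eq, smul_eq_mul, mul_one, h0, h1] at he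
    linear_combination he
  obtain ⟨h2, h3⟩ := eq_zero_of_forall_mul_add_eq_zero hθ' hdiag
  intro i
  fin_cases i
  exacts [h0, h1, h2, h3]

end Endomorphism

namespace IsCBPair

variable {F V : Type*} [Field F] [AddCommGroup V] [Module F V] {d : ℕ}
  {A Astar : Module.End F V}

theorem exists_mul_eq (hd : 1 ≤ d) (hpair : IsCBPair d A Astar) :
    ∃ q α β γ : F, Astar * A = q • (A * Astar) + α • A + β • Astar + γ • 1 := by
  obtain ⟨⟨b, hA, hAstar⟩, ⟨b', hAstar', hA'⟩⟩ := hpair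
  have hθ := hAstar.diagonal_diag.symm
  have hθ' := hA'.diagonal_diag.symm
  obtain ⟨p, r, hp, hr, hrel⟩ := exists_mul_eq_mul_aeval_add_aeval b hA hθ
    (injective_of_toMatrix_eq_diagonal b b' hθ hAstar')
  obtain ⟨hp1, hr1⟩ := natDegree_le_one_of_mul_eq_mul_aeval_add_aeval b' hAstar' hθ'
    (exists_ne_of_toMatrix_eq_diagonal hd b' b hθ' hA) hp hr hrel
  refine ⟨p.coeff 1, p.coeff 0, r.coeff 1, r.coeff 0, ?_⟩
  rw [hrel, aeval_eq_smul_add_smul_one_of_natDegree_le_one hp1,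
    aeval_eq_smul_add_smul_one_of_natDegree_le_one hr1, mul_add, mul_smul_comm, mul_smul_comm,
    mul_one]
  abel

theorem linearIndependent (hd : 1 ≤ d) (hpair : IsCBPair d A Astar) :
    LinearIndependent F ![A * Astar, A, Astar, 1] := by
  obtain ⟨⟨b, hA, hAstar⟩, ⟨b', hAstar', -⟩⟩ := hpair
  have hθ := hAstar.diagonal_diag.symm
  exact linearIndependent_of_toMatrix_eq_diagonal hd b hA hθ
    (exists_ne_of_toMatrix_eq_diagonal hd b b' hθ hAstar')

end IsCBPair

theorem stmt15_general {F V : Type*} [Field F] [AddCommGroup V] [Module F V]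
    (d : ℕ) (hd : 1 ≤ d)
    (A Astar : Module.End F V) (hpair : IsCBPair d A Astar) :
    ∃! t : F × F × F × F,
      t.1 • (A * Astar) - Astar * A + t.2.1 • A - t.2.2.1 • Astar =
        t.2.2.2 • (1 : Module.End F V) := by
  obtain ⟨q, α, β, γ, hrel⟩ := hpair.exists_mul_eq hd
  refine ⟨(q, α, -β, -γ), by dsimp only; rw [hrel]; module, ?_⟩
  rintro ⟨q', α', β', γ'⟩ h
  have hcoeff := Fintype.linearIndependent_iff.mp (hpair.linearIndependent hd)
    ![q' - q, α' - α, -(β' + β), -(γ' + γ)] (by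
      simp only [Fin.sum_univ_four, Matrix.cons_val]
      rw [← sub_eq_zero.mpr h, hrel]
      module)
  simp only [Fin.forall_fin_succ, Matrix.cons_val_zero, Matrix.cons_val_succ, sub_eq_zero,
    neg_eq_zero, add_eq_zero_iff_eq_neg] at hcoeff
  obtain ⟨rfl, rfl, rfl, rfl, -⟩ := hcoeff
  rfl

theorem stmt15 {F V : Type*} [Field F] [AddCommGroup V] [Module F V]
    [FiniteDimensional F V] (d : ℕ) (hd : 1 ≤ d) (hdim : Module.finrank F V = d + 1)
    (A Astar : Module.End F V) (hpair : IsCBPair d A Astar) :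
    ∃! t : F × F × F × F,
      t.1 • (A * Astar) - Astar * A + t.2.1 • A - t.2.2.1 • Astar =
        t.2.2.2 • (1 : Module.End F V) :=
  stmt15_general d hd A Astar hpair
end

section
/- Let n = d+1 be prime, char(F) = n, γ ∈ F not among 0,1,…,d. Define R = R(γ) ∈ Mat_n(F) by R_{0,d} = γ, R_{i,i-1} = i+γ for 1 ≤ i ≤ d, else 0. With A = A(γ) (diagonal entries i+γ, subdiagonal −i−γ, corner −γ) and A* = diag(0,1,…,d): (i) A* − A + γI = R = AA* − A*A; (ii) (A−I)R = RA and (A*−I)R = RA*; (iii) R^{n} = (γ)_{n}·I = γ(γ+1)⋯(γ+d)·I, which is a nonzero scalar times I, so R is invertible. -/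
/-!
`R` is the cyclic shift `e_j ↦ (j + 1 + γ) e_{j+1}` of `Fin (d + 1)`, and `A = A* + γ - R`
entrywise. Since the characteristic is `d + 1`, the cast `Fin (d + 1) → F` is additive, so
`A*` raises the index of the shift by exactly one: `A* R - R A* = R`. Both identities (i) and (ii)
are formal consequences of this one commutation relation. Going `d + 1` times around the cycle
collects every weight once, so `R ^ (d + 1) = ∏ i, (i + γ) • 1 = (γ)_{d+1} • 1`, and no factor
vanishes because `γ` avoids the prime field.
-/

/-- The Pochhammer symbol `(a)_r = a(a+1)⋯(a+r-1)`. -/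
def poch {F : Type*} [Field F] (a : F) (r : ℕ) : F :=
  ∏ ℓ ∈ Finset.range r, (a + ℓ)

open Fin.NatCast Fin.CommRing

section CharP

variable {K : Type*} [AddMonoidWithOne K] {n : ℕ} [CharP K n]

theorem Fin.natCast_val_add (a b : Fin n) : (((a + b : Fin n) : ℕ) : K) = a + b := by
  rw [Fin.val_add, ← CharP.cast_eq_mod, Nat.cast_add]

theorem Fin.natCast_val_add_one [NeZero n] (a : Fin n) :
    (((a + 1 : Fin n) : ℕ) : K) = a + 1 := by
  rw [Fin.natCast_val_add, Fin.val_one', ← CharP.cast_eq_mod, Nat.cast_one]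

end CharP

theorem Fin.eq_add_one_iff_val {n : ℕ} (i j : Fin (n + 1)) :
    i = j + 1 ↔ (i : ℕ) = j + 1 ∨ (i : ℕ) = 0 ∧ (j : ℕ) = n := by
  rw [Fin.ext_iff, Fin.val_add_one]
  split_ifs with h
  · simp [h]; omega
  · have := Fin.val_lt_last h; omega

theorem Fin.prod_range_comp_add {M : Type*} [CommMonoid M] {n : ℕ} [NeZero n] (w : Fin n → M)
    (a : Fin n) : ∏ ℓ ∈ Finset.range n, w (a + ℓ) = ∏ i, w i := by
  rw [← Fin.prod_univ_eq_prod_range fun ℓ => w (a + ℓ)]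
  simp only [Fin.cast_val_eq_self]
  exact Equiv.prod_comp (Equiv.addLeft a) w

namespace Matrix

variable {K : Type*} {n : ℕ} [NeZero n]

def weightedShift [Zero K] (w : Fin n → K) : Matrix (Fin n) (Fin n) K :=
  of fun i j => if i = j + 1 then w i else 0

theorem weightedShift_pow [CommSemiring K] (w : Fin n → K) (k : ℕ) :
    weightedShift w ^ k = of fun i j =>
      if i = j + (k : Fin n) then ∏ ℓ ∈ Finset.range k, w (j + 1 + ℓ) else 0 := by
  induction k with
  | zero => ext i j; simp [one_apply]
  | succ k ih =>
    ext i j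
    rw [pow_succ, ih, mul_apply, Finset.sum_eq_single (j + 1)]
    · have hshift : j + 1 + (k : Fin n) = j + ((k + 1 : ℕ) : Fin n) := by push_cast; ring
      simp only [weightedShift, of_apply, if_true, hshift]
      split_ifs
      · rw [Finset.prod_range_succ']
        congr 2
        · funext ℓ; congr 1; push_cast; ring
        · simp
      · exact zero_mul _
    · intro b _ hb
      simp [weightedShift, hb]
    · simp

theorem weightedShift_pow_card [CommSemiring K] (w : Fin n → K) :
    weightedShift w ^ n = (∏ i, w i) • (1 : Matrix (Fin n) (Fin n) K) := by
  ext i j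
  simp [weightedShift_pow, Fin.prod_range_comp_add, one_apply]

theorem diagonal_mul_weightedShift_sub [CommRing K] [CharP K n] (w : Fin n → K) :
    diagonal (fun i : Fin n => (i : K)) * weightedShift w
      - weightedShift w * diagonal (fun i : Fin n => (i : K)) = weightedShift w := by
  ext i j
  simp only [sub_apply, diagonal_mul, mul_diagonal, weightedShift, of_apply]
  split_ifs with h
  · rw [h, Fin.natCast_val_add_one]; ring
  · ring

end Matrix

section Commutator

variable {K M : Type*} [CommRing K] [Ring M] [Algebra K M]

theorem commutator_add_smul_one_sub_left (X Y : M) (c : K) :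
    (X + c • 1 - Y) * X - X * (X + c • 1 - Y) = X * Y - Y * X := by
  simp only [sub_mul, add_mul, mul_sub, mul_add, smul_mul_assoc, mul_smul_comm, one_mul, mul_one]
  abel

theorem commutator_add_smul_one_sub_right (X Y : M) (c : K) :
    (X + c • 1 - Y) * Y - Y * (X + c • 1 - Y) = X * Y - Y * X := by
  simp only [sub_mul, add_mul, mul_sub, mul_add, smul_mul_assoc, mul_smul_comm, one_mul, mul_one]
  abel

theorem sub_one_mul_eq_of_commutator_eq_self {X Y : M} (h : X * Y - Y * X = Y) :
    (X - 1) * Y = Y * X := by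
  rw [sub_mul, one_mul, sub_eq_iff_eq_add, ← sub_eq_iff_eq_add']
  exact h

end Commutator

theorem isUnit_of_pow_eq_smul_one {K M : Type*} [Field K] [Ring M] [Algebra K M] {X : M} {k : ℕ}
    {c : K} (hc : c ≠ 0) (h : X ^ (k + 1) = c • 1) : IsUnit X := by
  rw [← isUnit_pow_succ_iff, h, ← Algebra.algebraMap_eq_smul_one]
  exact hc.isUnit.map _

theorem poch_ne_zero_of_charP {F : Type*} [Field F] {n : ℕ} [NeZero n] [CharP F n] {γ : F}
    (hγ : ∀ i < n, γ ≠ i) : poch γ n ≠ 0 := by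
  refine Finset.prod_ne_zero_iff.mpr fun ℓ hℓ hzero => ?_
  refine hγ ((n - ℓ) % n) (Nat.mod_lt _ (NeZero.pos n)) ?_
  rw [← CharP.cast_eq_mod, Nat.cast_sub (Finset.mem_range.mp hℓ).le, CharP.cast_eq_zero]
  linear_combination hzero

theorem stmt19_general {F : Type*} [Field F] (d : ℕ) (hd : 1 ≤ d)
    (hchar : CharP F (d + 1)) (γ : F)
    (hγ : ∀ i : ℕ, i ≤ d → γ ≠ (i : F))
    (A Astar R : Matrix (Fin (d + 1)) (Fin (d + 1)) F)
    (hA : A = Matrix.of fun i j : Fin (d + 1) =>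
      if i.val = j.val then (i.val : F) + γ
      else if i.val = j.val + 1 then -(i.val : F) - γ
      else if i.val = 0 ∧ j.val = d then -γ else 0)
    (hAstar : Astar = Matrix.diagonal fun i : Fin (d + 1) => (i.val : F))
    (hR : R = Matrix.of fun i j : Fin (d + 1) =>
      if i.val = j.val + 1 then (i.val : F) + γ
      else if i.val = 0 ∧ j.val = d then γ else 0) :
    (Astar - A + γ • 1 = R ∧ R = A * Astar - Astar * A) ∧
      ((A - 1) * R = R * A ∧ (Astar - 1) * R = R * Astar) ∧
      (R ^ (d + 1) = poch γ (d + 1) • (1 : Matrix (Fin (d + 1)) (Fin (d + 1)) F) ∧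
        poch γ (d + 1) ≠ 0 ∧ IsUnit R) := by
  have hA_eq : A = Astar + γ • 1 - R := by
    ext i j
    simp only [hA, hAstar, hR, Matrix.of_apply, Matrix.sub_apply, Matrix.add_apply,
      Matrix.smul_apply, Matrix.diagonal_apply, Matrix.one_apply, Fin.ext_iff, smul_eq_mul]
    split_ifs <;> first | omega | ring
  have hR_shift : R = Matrix.weightedShift fun i => (i : F) + γ := by
    ext i j
    simp only [hR, Matrix.weightedShift, Matrix.of_apply, Fin.eq_add_one_iff_val]
    split_ifs <;> simp_all
  have hcomm : Astar * R - R * Astar = R := by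
    rw [hAstar, hR_shift]
    exact Matrix.diagonal_mul_weightedShift_sub _
  have hpow : R ^ (d + 1) = poch γ (d + 1) • (1 : Matrix (Fin (d + 1)) (Fin (d + 1)) F) := by
    rw [hR_shift, Matrix.weightedShift_pow_card, poch, ← Fin.prod_univ_eq_prod_range]
    simp only [add_comm]
  have hpoch : poch γ (d + 1) ≠ 0 :=
    poch_ne_zero_of_charP fun i hi => hγ i (Nat.lt_succ_iff.mp hi)
  subst hA_eq
  refine ⟨⟨by abel, ((commutator_add_smul_one_sub_left _ _ γ).trans hcomm).symm⟩,
    ⟨sub_one_mul_eq_of_commutator_eq_self ((commutator_add_smul_one_sub_right _ _ γ).trans hcomm),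
      sub_one_mul_eq_of_commutator_eq_self hcomm⟩,
    hpow, hpoch, isUnit_of_pow_eq_smul_one hpoch hpow⟩

theorem stmt19 {F : Type*} [Field F] (d : ℕ) (hd : 1 ≤ d)
    (hprime : Nat.Prime (d + 1)) (hchar : CharP F (d + 1)) (γ : F)
    (hγ : ∀ i : ℕ, i ≤ d → γ ≠ (i : F))
    (A Astar R : Matrix (Fin (d + 1)) (Fin (d + 1)) F)
    (hA : A = Matrix.of fun i j : Fin (d + 1) =>
      if i.val = j.val then (i.val : F) + γ
      else if i.val = j.val + 1 then -(i.val : F) - γ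
      else if i.val = 0 ∧ j.val = d then -γ else 0)
    (hAstar : Astar = Matrix.diagonal fun i : Fin (d + 1) => (i.val : F))
    (hR : R = Matrix.of fun i j : Fin (d + 1) =>
      if i.val = j.val + 1 then (i.val : F) + γ
      else if i.val = 0 ∧ j.val = d then γ else 0) :
    (Astar - A + γ • 1 = R ∧ R = A * Astar - Astar * A) ∧
      ((A - 1) * R = R * A ∧ (Astar - 1) * R = R * Astar) ∧
      (R ^ (d + 1) = poch γ (d + 1) • (1 : Matrix (Fin (d + 1)) (Fin (d + 1)) F) ∧
        poch γ (d + 1) ≠ 0 ∧ IsUnit R) :=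
  stmt19_general d hd hchar γ hγ A Astar R hA hAstar hR
end
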